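/- Let ϑ be C² with ϑ'' > 0, v = ϑ' with inverse u(·), and η convex. For u⁻ ≠ u⁺, with η̄(u⁻,u⁺) = ∫₀¹ η(u(θ v(u⁺)+(1−θ) v(u⁻))) dθ and β(u⁻,u⁺) defined as above, one has η̄(u⁻,u⁺) − η(u⁻) ≤ 2β(u⁻,u⁺)(η(u⁺) − η(u⁻)). -/

import Mathlib

/-!
Since `ϑ'` is strictly increasing, its inverse `u` is increasing, so `u(θ v⁺ + (1 - θ) v⁻)` lies
between `u⁻` and `u⁺`, at the relative position `ς(θ)` whose integral is `2β`. There the convex `η`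
lies below its chord: `η(u) ≤ η(u⁻) + ς (η(u⁺) - η(u⁻))`. Integrating over `θ ∈ [0, 1]` gives
the inequality.
-/

open Set

theorem StrictMono.mapsTo_uIcc_of_rightInverse {α β : Type*} [LinearOrder α] [LinearOrder β]
    {f : α → β} {g : β → α} (hf : StrictMono f) (hg : Function.RightInverse g f) (a b : α) :
    MapsTo g (uIcc (f a) (f b)) (uIcc a b) := by
  let e := hf.orderIsoOfRightInverse f g hg
  have he := e.symm.monotone.mapsTo_uIcc (a := e a) (b := e b)
  rwa [e.symm_apply_apply, e.symm_apply_apply] at he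

theorem mul_add_one_sub_mul_mem_uIcc {θ : ℝ} (hθ : θ ∈ Icc (0 : ℝ) 1) (x y : ℝ) :
    θ * y + (1 - θ) * x ∈ uIcc x y := by
  rw [← segment_eq_uIcc]
  exact ⟨1 - θ, θ, by linarith [hθ.2], hθ.1, by ring, by simp only [smul_eq_mul]; ring⟩

theorem ConvexOn.le_chord_of_mem_uIcc {s : Set ℝ} {f : ℝ → ℝ} (hf : ConvexOn ℝ s f)
    {a b x : ℝ} (ha : a ∈ s) (hb : b ∈ s) (hx : x ∈ uIcc a b) :
    f x ≤ f a + (x - a) / (b - a) * (f b - f a) := by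
  rcases eq_or_ne a b with rfl | hab
  · simp_all -- here `x = a`, and `(x - a) / 0 = 0`
  obtain ⟨p, q, hp, hq, hpq, rfl⟩ : x ∈ segment ℝ a b := segment_eq_uIcc a b ▸ hx
  have hconvex := hf.2 ha hb hp hq hpq
  obtain rfl : p = 1 - q := eq_sub_of_add_eq hpq
  simp only [smul_eq_mul] at hconvex ⊢
  have hq_eq : ((1 - q) * a + q * b - a) / (b - a) = q := by
    field_simp [sub_ne_zero.mpr hab.symm]
    ring
  rw [hq_eq]
  linarith

theorem ConvexOn.intervalIntegral_comp_le_chord {η w : ℝ → ℝ} (hη : ConvexOn ℝ univ η)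
    (hw : Continuous w) {a b : ℝ} (hwab : ∀ θ ∈ Icc (0 : ℝ) 1, w θ ∈ uIcc a b) :
    (∫ θ in (0 : ℝ)..1, η (w θ)) - η a ≤
      (∫ θ in (0 : ℝ)..1, (w θ - a) / (b - a)) * (η b - η a) := by
  have hη_cont : Continuous η := continuousOn_univ.mp (hη.continuousOn isOpen_univ)
  have hς_cont : Continuous fun θ => (w θ - a) / (b - a) := by fun_prop
  have hchord : ∀ θ ∈ Icc (0 : ℝ) 1,
      η (w θ) ≤ η a + (w θ - a) / (b - a) * (η b - η a) := fun θ hθ =>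
    hη.le_chord_of_mem_uIcc (mem_univ a) (mem_univ b) (hwab θ hθ)
  have hint : ∫ θ in (0 : ℝ)..1, η (w θ) ≤
      ∫ θ in (0 : ℝ)..1, (η a + (w θ - a) / (b - a) * (η b - η a)) :=
    intervalIntegral.integral_mono_on zero_le_one
      ((hη_cont.comp hw).intervalIntegrable 0 1)
      ((continuous_const.add (hς_cont.mul continuous_const)).intervalIntegrable 0 1) hchord
  rw [intervalIntegral.integral_add intervalIntegrable_const
    ((hς_cont.intervalIntegrable 0 1).mul_const _),
    intervalIntegral.integral_mul_const, intervalIntegral.integral_const] at hint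
  simp only [sub_zero, one_smul] at hint
  linarith

theorem stmt6_general (ϑ uinv η : ℝ → ℝ)
    (hconv : ∀ x, 0 < deriv (deriv ϑ) x)
    (hinvR : Function.RightInverse uinv (deriv ϑ))
    (hcont : Continuous uinv)
    (hηcvx : ConvexOn ℝ Set.univ η)
    (um up : ℝ) :
    (∫ θ in (0:ℝ)..1, η (uinv (θ * deriv ϑ up + (1 - θ) * deriv ϑ um))) - η um ≤
      2 * ((1 / 2) * ∫ θ in (0:ℝ)..1,
          (uinv (θ * deriv ϑ up + (1 - θ) * deriv ϑ um) - um) / (up - um)) *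
        (η up - η um) := by
  have hu_maps := (strictMono_of_deriv_pos hconv).mapsTo_uIcc_of_rightInverse hinvR um up
  have hbound := hηcvx.intervalIntegral_comp_le_chord (a := um) (b := up) (by fun_prop)
    fun θ hθ => hu_maps (mul_add_one_sub_mul_mem_uIcc hθ _ _)
  linarith

/-- Key inequality: η̄(u⁻,u⁺) − η(u⁻) ≤ 2β(u⁻,u⁺)(η(u⁺) − η(u⁻)). -/
theorem stmt6 (ϑ uinv η : ℝ → ℝ)
    (hϑ : ContDiff ℝ 2 ϑ) (hconv : ∀ x, 0 < deriv (deriv ϑ) x)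
    (hinvL : Function.LeftInverse uinv (deriv ϑ))
    (hinvR : Function.RightInverse uinv (deriv ϑ))
    (hcont : Continuous uinv)
    (hηcvx : ConvexOn ℝ Set.univ η)
    (um up : ℝ) (hne : um ≠ up) :
    (∫ θ in (0:ℝ)..1, η (uinv (θ * deriv ϑ up + (1 - θ) * deriv ϑ um))) - η um ≤
      2 * ((1 / 2) * ∫ θ in (0:ℝ)..1,
          (uinv (θ * deriv ϑ up + (1 - θ) * deriv ϑ um) - um) / (up - um)) *
        (η up - η um) :=
  stmt6_general ϑ uinv η hconv hinvR hcont hηcvx um up
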